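/- arXiv:1610.05879 — 2 statements merged into one kernel-verified Lean document; each statement's English description precedes it below -/
import Mathlib

section
/- Let n ∈ ℝ² be a unit vector with ⟨n, d₁ - d₂⟩ = 0. Then for every a ∈ ℝ and every integer m, the translation vector ℓ = a·n + (2πm/(k‖d₁ - d₂‖²))·(d₁ - d₂) satisfies |w_ℓ(x̂)| = |w(x̂)| for all x̂ ∈ 𝕊¹. (Theorem 2.2: the phaseless far-field pattern is invariant for translations ℓ = ℓ_m along these countably many parallel lines.) -/
open Complex RealInnerProductSpace

/-! The two phase factors of `w_ℓ` differ by `exp (i k ⟪ℓ, d₁ - d₂⟫)`. Along `n` this phase does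
not move, and the step `2π / (k ‖d₁ - d₂‖²)` along `d₁ - d₂` turns it by exactly `2π`; so for
`ℓ = ℓ_m` both factors coincide, and a common unimodular factor does not change the modulus. -/

lemma norm_exp_mul_add_exp_mul_of_exp_sub_eq_one {α β : ℝ} (z w : ℂ)
    (h : exp (I * ((α - β : ℝ) : ℂ)) = 1) :
    ‖exp (I * α) * z + exp (I * β) * w‖ = ‖z + w‖ := by
  have hαβ : exp (I * α) = exp (I * β) := by
    rw [← mul_one (exp (I * β)), ← h, ← exp_add]
    push_cast
    ring_nf
  rw [hαβ, ← mul_add, norm_mul, mul_comm I, norm_exp_ofReal_mul_I, one_mul]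

/-- If `t = 0` the quotient is `0` rather than `2πm / t`, and the phase is `0` instead of `2πm`. -/
lemma exp_I_mul_mul_two_pi_int_div (t : ℝ) (m : ℤ) :
    exp (I * ((t * (2 * Real.pi * m / t) : ℝ) : ℂ)) = 1 := by
  rcases eq_or_ne t 0 with rfl | ht
  · simp
  · rw [mul_div_cancel₀ _ ht]
    push_cast
    rw [show I * (2 * Real.pi * m) = m * (2 * Real.pi * I) by ring, exp_int_mul_two_pi_mul_I]

lemma inner_sub_right_sub_inner_sub_right {E : Type*} [NormedAddCommGroup E]
    [InnerProductSpace ℝ E] (ℓ d₁ d₂ x : E) :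
    ⟪ℓ, d₁ - x⟫ - ⟪ℓ, d₂ - x⟫ = ⟪ℓ, d₁ - d₂⟫ := by
  rw [← inner_sub_right, sub_sub_sub_cancel_right]

lemma inner_smul_add_smul_self_of_inner_eq_zero {E : Type*} [NormedAddCommGroup E]
    [InnerProductSpace ℝ E] {n u : E} (h : ⟪n, u⟫ = 0) (a c : ℝ) :
    ⟪a • n + c • u, u⟫ = c * ‖u‖ ^ 2 := by
  rw [inner_add_left, real_inner_smul_left, real_inner_smul_left, h,
    real_inner_self_eq_norm_sq, mul_zero, zero_add]

theorem stmt_2_general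
    (k : ℝ)
    (d₁ d₂ : EuclideanSpace ℝ (Fin 2))
    (n : EuclideanSpace ℝ (Fin 2)) (hperp : ⟪n, d₁ - d₂⟫ = 0)
    (v₁ v₂ : EuclideanSpace ℝ (Fin 2) → ℂ) :
    ∀ (a : ℝ) (m : ℤ),
      ∀ x : EuclideanSpace ℝ (Fin 2), ‖x‖ = 1 →
        ‖(Complex.exp (Complex.I *
                (k * ⟪a • n + ((2 * Real.pi * m) / (k * ‖d₁ - d₂‖ ^ 2)) • (d₁ - d₂),
                  d₁ - x⟫)) * v₁ x
              + Complex.exp (Complex.I *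
                (k * ⟪a • n + ((2 * Real.pi * m) / (k * ‖d₁ - d₂‖ ^ 2)) • (d₁ - d₂),
                  d₂ - x⟫)) * v₂ x)‖
          = ‖v₁ x + v₂ x‖ := by
  intro a m x _
  set ℓ := a • n + ((2 * Real.pi * m) / (k * ‖d₁ - d₂‖ ^ 2)) • (d₁ - d₂)
  have hphase : k * ⟪ℓ, d₁ - x⟫ - k * ⟪ℓ, d₂ - x⟫
      = k * ‖d₁ - d₂‖ ^ 2 * (2 * Real.pi * m / (k * ‖d₁ - d₂‖ ^ 2)) := by
    rw [← mul_sub, inner_sub_right_sub_inner_sub_right,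
      inner_smul_add_smul_self_of_inner_eq_zero hperp]
    ring
  have key := norm_exp_mul_add_exp_mul_of_exp_sub_eq_one (v₁ x) (v₂ x)
    (hphase ▸ exp_I_mul_mul_two_pi_int_div _ m)
  push_cast at key
  exact key

/-- Theorem 2.2: for a unit vector `n` with `⟨n, d₁ - d₂⟩ = 0`, every
translation `ℓ = a n + (2πm/(k‖d₁-d₂‖²))(d₁-d₂)` with `a ∈ ℝ`, `m ∈ ℤ` leaves the
phaseless far-field pattern invariant: `|w_ℓ(x̂)| = |w(x̂)|` for all `x̂ ∈ 𝕊¹`. -/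
theorem stmt_2
    (k : ℝ) (hk : 0 < k)
    (d₁ d₂ : EuclideanSpace ℝ (Fin 2))
    (hd₁ : ‖d₁‖ = 1) (hd₂ : ‖d₂‖ = 1) (hne : d₁ ≠ d₂)
    (n : EuclideanSpace ℝ (Fin 2)) (hn : ‖n‖ = 1) (hperp : ⟪n, d₁ - d₂⟫ = 0)
    (v₁ v₂ : EuclideanSpace ℝ (Fin 2) → ℂ) :
    ∀ (a : ℝ) (m : ℤ),
      ∀ x : EuclideanSpace ℝ (Fin 2), ‖x‖ = 1 →
        ‖(Complex.exp (Complex.I *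
                (k * ⟪a • n + ((2 * Real.pi * m) / (k * ‖d₁ - d₂‖ ^ 2)) • (d₁ - d₂),
                  d₁ - x⟫)) * v₁ x
              + Complex.exp (Complex.I *
                (k * ⟪a • n + ((2 * Real.pi * m) / (k * ‖d₁ - d₂‖ ^ 2)) • (d₁ - d₂),
                  d₂ - x⟫)) * v₂ x)‖
          = ‖v₁ x + v₂ x‖ :=
  stmt_2_general k d₁ d₂ n hperp v₁ v₂
end

section
/- For l = 1, 2 let d_{1l}, d_{2l} ∈ 𝕊¹ with d_{1l} ≠ d_{2l}, and assume the vectors d_{11} - d_{21} and d_{12} - d_{22} are linearly independent. For l = 1, 2 let v₁^{(l)}, v₂^{(l)} : ℝ² → ℂ be functions such that v₁^{(l)}(x̂_l)·conj(v₂^{(l)}(x̂_l)) ≠ 0 for some point x̂_l ∈ 𝕊¹, and define w^{(l)}(x̂) := v₁^{(l)}(x̂) + v₂^{(l)}(x̂) and, for ℓ ∈ ℝ², w_ℓ^{(l)}(x̂) := e^{ik⟨ℓ, d_{1l} - x̂⟩} v₁^{(l)}(x̂) + e^{ik⟨ℓ, d_{2l} - x̂⟩} v₂^{(l)}(x̂).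 Then the set of translation vectors ℓ ∈ ℝ² satisfying |w_ℓ^{(l)}(x̂)| = |w^{(l)}(x̂)| for all x̂ ∈ 𝕊¹ and for both l = 1 and l = 2 is countable. (Abstract form of Corollary 2.1: with two sets of incident directions whose difference vectors are non-parallel, the phaseless far-field pattern is invariant only for a countable set of translations.) -/
/-!
Multiplying both terms by a common unimodular factor, invariance of `|w_ℓ^{(l)}|` at `x̂_l` says
`|e^{i t_l} a + b| = |a + b|` with `t_l = k⟪ℓ, d_{1l} - d_{2l}⟫`, `a = v₁^{(l)}(x̂_l)`,
`b = v₂^{(l)}(x̂_l)`. Expanding the squares, this is `Re (e^{i t_l} a b̄) = Re (a b̄)`, i.e.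
`cos (t_l + arg (a b̄)) = cos (arg (a b̄))` since `a b̄ ≠ 0`; so each `t_l` lies in a countable set.
As `d_{11} - d_{21}` and `d_{12} - d_{22}` form a basis of `ℝ²`, the two inner products
`⟪ℓ, d_{1l} - d_{2l}⟫` determine `ℓ`.
-/

open Complex ComplexConjugate RealInnerProductSpace

theorem Real.countable_setOf_cos_eq (y : ℝ) : {x : ℝ | Real.cos x = Real.cos y}.Countable := by
  refine ((Set.countable_range fun n : ℤ => y - 2 * n * Real.pi).union
    (Set.countable_range fun n : ℤ => 2 * n * Real.pi - y)).mono fun x hx => ?_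
  obtain ⟨n, hn | hn⟩ := Real.cos_eq_cos_iff.mp hx
  · exact Or.inl ⟨n, by linarith⟩
  · exact Or.inr ⟨n, by linarith⟩

theorem Real.countable_setOf_cos_mul_add_eq {k : ℝ} (hk : k ≠ 0) (φ : ℝ) :
    {s : ℝ | Real.cos (k * s + φ) = Real.cos φ}.Countable :=
  (Real.countable_setOf_cos_eq φ).preimage fun s t h => by
    simpa [hk] using (add_left_injective φ h)

theorem InnerProductSpace.countable_setOf_forall_inner_mem {𝕜 E ι : Type*} [RCLike 𝕜]
    [NormedAddCommGroup E] [InnerProductSpace 𝕜 E] [Finite ι] (b : Module.Basis ι 𝕜 E)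
    {C : ι → Set 𝕜} (hC : ∀ i, (C i).Countable) :
    {x : E | ∀ i, inner 𝕜 x (b i) ∈ C i}.Countable :=
  (Set.countable_pi hC).preimage (f := fun x i => inner 𝕜 x (b i))
    fun _ _ h => ext_inner_right_basis b (congrFun h)

theorem Complex.norm_exp_mul_I_mul_add_eq_norm_add_iff (t : ℝ) (a b : ℂ) :
    ‖exp (t * I) * a + b‖ = ‖a + b‖ ↔
      (exp (t * I) * (a * conj b)).re = (a * conj b).re := by
  have hsq : ∀ u : ℂ, ‖u‖ = 1 → ‖u * a + b‖ ^ 2 = ‖a‖ ^ 2 + ‖b‖ ^ 2 + 2 * (u * (a * conj b)).re :=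
    fun u hu => by
      rw [← normSq_eq_norm_sq, normSq_add, normSq_mul, normSq_eq_norm_sq u, hu,
        normSq_eq_norm_sq, normSq_eq_norm_sq, mul_assoc]
      ring
  have h1 := hsq 1 norm_one
  simp only [one_mul] at h1
  rw [← sq_eq_sq₀ (norm_nonneg _) (norm_nonneg _), hsq _ (norm_exp_ofReal_mul_I t), h1]
  constructor <;> intro h <;> linarith

theorem Complex.re_exp_mul_I_mul (t : ℝ) (z : ℂ) :
    (exp (t * I) * z).re = ‖z‖ * Real.cos (t + arg z) := by
  conv_lhs => rw [← norm_mul_exp_arg_mul_I z]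
  rw [mul_left_comm, ← exp_add, ← add_mul, ← ofReal_add, re_ofReal_mul, exp_ofReal_mul_I_re]

theorem Complex.cos_add_arg_eq_of_norm_exp_mul_I_mul_add_eq {t : ℝ} {a b : ℂ}
    (hab : a * conj b ≠ 0) (h : ‖exp (t * I) * a + b‖ = ‖a + b‖) :
    Real.cos (t + arg (a * conj b)) = Real.cos (arg (a * conj b)) := by
  rw [norm_exp_mul_I_mul_add_eq_norm_add_iff, re_exp_mul_I_mul] at h
  have h0 := re_exp_mul_I_mul 0 (a * conj b)
  rw [ofReal_zero, zero_mul, exp_zero, one_mul, zero_add] at h0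
  exact mul_left_cancel₀ (norm_ne_zero_iff.mpr hab) (h.trans h0)

theorem Complex.norm_exp_mul_add_exp_mul (α β : ℝ) (a b : ℂ) :
    ‖exp (I * α) * a + exp (I * β) * b‖ = ‖exp ((α - β : ℝ) * I) * a + b‖ := by
  have : exp (I * α) * a + exp (I * β) * b = exp (β * I) * (exp ((α - β : ℝ) * I) * a + b) := by
    rw [mul_add, ← mul_assoc, ← exp_add]; push_cast; ring_nf
  rw [this, norm_mul, norm_exp_ofReal_mul_I, one_mul]

theorem stmt_6_general
    (k : ℝ) (hk : 0 < k)
    (d₁ d₂ : Fin 2 → EuclideanSpace ℝ (Fin 2))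
    (hind : LinearIndependent ℝ ![d₁ 0 - d₂ 0, d₁ 1 - d₂ 1])
    (v₁ v₂ : Fin 2 → EuclideanSpace ℝ (Fin 2) → ℂ)
    (x₀ : Fin 2 → EuclideanSpace ℝ (Fin 2)) (hx₀ : ∀ l, ‖x₀ l‖ = 1)
    (hv : ∀ l, v₁ l (x₀ l) * (starRingEnd ℂ) (v₂ l (x₀ l)) ≠ 0) :
    {ℓ : EuclideanSpace ℝ (Fin 2) | ∀ l : Fin 2,
      ∀ x : EuclideanSpace ℝ (Fin 2), ‖x‖ = 1 →
        ‖Complex.exp (Complex.I * (k * ⟪ℓ, d₁ l - x⟫)) * v₁ l x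
            + Complex.exp (Complex.I * (k * ⟪ℓ, d₂ l - x⟫)) * v₂ l x‖
          = ‖v₁ l x + v₂ l x‖}.Countable := by
  have hdiff : ![d₁ 0 - d₂ 0, d₁ 1 - d₂ 1] = fun l => d₁ l - d₂ l := by
    funext l; fin_cases l <;> rfl
  rw [hdiff] at hind
  let b := basisOfLinearIndependentOfCardEqFinrank hind (by simp)
  let φ l := arg (v₁ l (x₀ l) * conj (v₂ l (x₀ l)))
  refine (InnerProductSpace.countable_setOf_forall_inner_mem b
    (C := fun l => {s | Real.cos (k * s + φ l) = Real.cos (φ l)})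
    fun l => Real.countable_setOf_cos_mul_add_eq hk.ne' (φ l)).mono ?_
  intro ℓ hℓ l
  have h := hℓ l (x₀ l) (hx₀ l)
  rw [← ofReal_mul, ← ofReal_mul, norm_exp_mul_add_exp_mul, ← mul_sub, ← inner_sub_right,
    sub_sub_sub_cancel_right] at h
  exact cos_add_arg_eq_of_norm_exp_mul_I_mul_add_eq (hv l)
    (by rwa [coe_basisOfLinearIndependentOfCardEqFinrank])

/-- Abstract form of Corollary 2.1: with two sets of incident directions whose
difference vectors are linearly independent, and far-field patterns whose product
`v₁^{(l)} conj(v₂^{(l)})` does not vanish identically on `𝕊¹`, the set of translations `ℓ`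
leaving both phaseless far-field patterns invariant is countable. -/
theorem stmt_6
    (k : ℝ) (hk : 0 < k)
    (d₁ d₂ : Fin 2 → EuclideanSpace ℝ (Fin 2))
    (hd₁ : ∀ l, ‖d₁ l‖ = 1) (hd₂ : ∀ l, ‖d₂ l‖ = 1)
    (hne : ∀ l, d₁ l ≠ d₂ l)
    (hind : LinearIndependent ℝ ![d₁ 0 - d₂ 0, d₁ 1 - d₂ 1])
    (v₁ v₂ : Fin 2 → EuclideanSpace ℝ (Fin 2) → ℂ)
    (x₀ : Fin 2 → EuclideanSpace ℝ (Fin 2)) (hx₀ : ∀ l, ‖x₀ l‖ = 1)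
    (hv : ∀ l, v₁ l (x₀ l) * (starRingEnd ℂ) (v₂ l (x₀ l)) ≠ 0) :
    {ℓ : EuclideanSpace ℝ (Fin 2) | ∀ l : Fin 2,
      ∀ x : EuclideanSpace ℝ (Fin 2), ‖x‖ = 1 →
        ‖Complex.exp (Complex.I * (k * ⟪ℓ, d₁ l - x⟫)) * v₁ l x
            + Complex.exp (Complex.I * (k * ⟪ℓ, d₂ l - x⟫)) * v₂ l x‖
          = ‖v₁ l x + v₂ l x‖}.Countable :=
  stmt_6_general k hk d₁ d₂ hind v₁ v₂ x₀ hx₀ hv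
end
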